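/- arXiv:1305.6018 — 2 statements merged into one kernel-verified Lean document; each statement's English description precedes it below -/
import Mathlib

section
/- For every positive integer k and every positive integer r, (1/k^{r+1}) · Σ_{j=1}^{k} j^r · c_k(j) = Σ_{d | k} (μ(d)/d^{r+1}) · Σ_{m=1}^{d} m^r, where μ is the Möbius function. -/
open Finset ArithmeticFunction

/-- The Ramanujan sum `c_k(j) = ∑_{1 ≤ m ≤ k, gcd(m,k)=1} exp(2πimj/k)`. -/
noncomputable def ramanujanSum (k : ℕ) (j : ℤ) : ℂ :=
  ∑ m ∈ (Finset.Icc 1 k).filter (fun m => Nat.gcd m k = 1),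
    Complex.exp (2 * (Real.pi : ℂ) * Complex.I * (m : ℂ) * (j : ℂ) / (k : ℂ))

/-!
Möbius inversion of the coprimality condition gives `c_k(j) = ∑_{d ∣ k} μ(d) (k/d) [k/d ∣ j]`,
the inner sums being full sums of `(k/d)`-th roots of unity. In the weighted sum only the
multiples `j = (k/d) m`, `1 ≤ m ≤ d`, survive, each contributing `(k/d)^r m^r`, and
`k = d (k/d)` turns `(k/d)^(r+1) / k^(r+1)` into `1 / d^(r+1)`.
-/

open scoped ArithmeticFunction.Moebius

theorem ArithmeticFunction.sum_divisors_moebius (n : ℕ) :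
    ∑ d ∈ n.divisors, μ d = if n = 1 then 1 else 0 := by
  rw [← coe_mul_zeta_apply, moebius_mul_coe_zeta, one_apply]

theorem ArithmeticFunction.sum_divisors_filter_dvd_moebius {k : ℕ} (hk : k ≠ 0) (m : ℕ) :
    ∑ d ∈ k.divisors with d ∣ m, μ d = if m.gcd k = 1 then 1 else 0 := by
  have hfilter : {d ∈ k.divisors | d ∣ m} = {d ∈ k.divisors | d ∣ m.gcd k} :=
    filter_congr fun d hd => by rw [Nat.dvd_gcd_iff, and_iff_left (Nat.dvd_of_mem_divisors hd)]
  rw [hfilter, Nat.divisors_filter_dvd_of_dvd hk (Nat.gcd_dvd_right m k), sum_divisors_moebius]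

theorem Finset.sum_Icc_filter_dvd {M : Type*} [AddCommMonoid M] {d : ℕ} (hd : d ≠ 0) (k : ℕ)
    (f : ℕ → M) : ∑ m ∈ Icc 1 k with d ∣ m, f m = ∑ t ∈ Icc 1 (k / d), f (d * t) := by
  have hmem : ∀ t, d * t ∈ Icc 1 k ↔ t ∈ Icc 1 (k / d) := fun t => by
    simp only [mem_Icc, Nat.one_le_iff_ne_zero, mul_ne_zero_iff, ne_eq, hd, not_false_eq_true,
      true_and, Nat.le_div_iff_mul_le (Nat.pos_of_ne_zero hd), mul_comm t d]
  symm
  refine sum_nbij (d * ·) (fun t ht => ?_) (mul_right_injective₀ hd).injOn (fun m hm => ?_)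
    fun _ _ => rfl
  · exact mem_filter.mpr ⟨(hmem t).mpr (mem_coe.mp ht), dvd_mul_right d t⟩
  · obtain ⟨hm, t, rfl⟩ := mem_filter.mp hm
    exact ⟨t, (hmem t).mp hm, rfl⟩

theorem sum_Icc_coprime_eq_sum_divisors_moebius {M : Type*} [AddCommGroup M] (k : ℕ)
    (f : ℕ → M) :
    ∑ m ∈ Icc 1 k with m.gcd k = 1, f m =
      ∑ d ∈ k.divisors, μ d • ∑ t ∈ Icc 1 (k / d), f (d * t) := by
  obtain rfl | hk := eq_or_ne k 0
  · simp
  calc ∑ m ∈ Icc 1 k with m.gcd k = 1, f m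
      = ∑ m ∈ Icc 1 k, (∑ d ∈ k.divisors with d ∣ m, μ d) • f m := by
        rw [sum_filter]
        refine sum_congr rfl fun m _ => ?_
        rw [sum_divisors_filter_dvd_moebius hk, ite_smul, one_smul, zero_smul]
    _ = ∑ d ∈ k.divisors, μ d • ∑ m ∈ Icc 1 k with d ∣ m, f m := by
        simp_rw [sum_smul, sum_filter, smul_sum, smul_ite, smul_zero]
        exact sum_comm
    _ = _ := sum_congr rfl fun d hd => by
        rw [sum_Icc_filter_dvd (Nat.pos_of_mem_divisors hd).ne']

theorem sum_Icc_pow_eq_ite_of_pow_eq_one {K : Type*} [Field K] [DecidableEq K] {ω : K} {q : ℕ}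
    (hω : ω ^ q = 1) : ∑ t ∈ Icc 1 q, ω ^ t = if ω = 1 then (q : K) else 0 := by
  split_ifs with h
  · simp [h]
  · have hshift : ∑ t ∈ Icc 1 q, ω ^ t = ω * ∑ t ∈ range q, ω ^ t := by
      rw [← Ico_add_one_right_eq_Icc, sum_Ico_eq_sum_range, mul_sum]
      simp only [Nat.add_sub_cancel, pow_add, pow_one]
    rw [hshift, geom_sum_eq h, hω, sub_self, zero_div, mul_zero]

open Complex Real in
theorem Complex.sum_Icc_exp_two_pi_I_mul_div (q : ℕ) (j : ℤ) :
    ∑ t ∈ Icc 1 q, exp (2 * π * I * t * j / q) = if (q : ℤ) ∣ j then (q : ℂ) else 0 := by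
  obtain rfl | hq := eq_or_ne q 0
  · simp
  have hζ := isPrimitiveRoot_exp q hq
  have hexp : ∀ t : ℕ, exp (2 * π * I * t * j / q) = (exp (2 * π * I / q) ^ j) ^ t := fun t => by
    rw [← exp_int_mul, ← Complex.exp_nat_mul]
    ring_nf
  have hω : (exp (2 * π * I / q) ^ j) ^ q = 1 := by
    rw [← zpow_natCast, ← zpow_mul, hζ.zpow_eq_one_iff_dvd]
    exact dvd_mul_left _ _
  simp_rw [hexp, sum_Icc_pow_eq_ite_of_pow_eq_one hω, hζ.zpow_eq_one_iff_dvd]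

theorem ramanujanSum_eq_sum_divisors (k : ℕ) (j : ℤ) :
    ramanujanSum k j =
      ∑ d ∈ k.divisors, μ d * if ((k / d : ℕ) : ℤ) ∣ j then ((k / d : ℕ) : ℂ) else 0 := by
  rw [ramanujanSum, sum_Icc_coprime_eq_sum_divisors_moebius]
  refine sum_congr rfl fun d hd => ?_
  obtain ⟨hdk, hk⟩ := Nat.mem_divisors.mp hd
  have hd0 : (d : ℂ) ≠ 0 := Nat.cast_ne_zero.mpr (ne_zero_of_dvd_ne_zero hk hdk)
  have hk_eq : (k : ℂ) = d * (k / d : ℕ) := by rw [← Nat.cast_mul, Nat.mul_div_cancel' hdk]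
  rw [zsmul_eq_mul, ← Complex.sum_Icc_exp_two_pi_I_mul_div]
  refine congr_arg _ (sum_congr rfl fun t _ => ?_)
  rw [hk_eq]
  push_cast
  field_simp

theorem sum_Icc_mul_ramanujanSum (k : ℕ) (f : ℕ → ℂ) :
    ∑ j ∈ Icc 1 k, f j * ramanujanSum k j =
      ∑ d ∈ k.divisors, μ d * (k / d : ℕ) * ∑ t ∈ Icc 1 d, f (k / d * t) := by
  simp_rw [ramanujanSum_eq_sum_divisors, mul_sum]
  rw [sum_comm]
  refine sum_congr rfl fun d hd => ?_
  obtain ⟨hdk, hk⟩ := Nat.mem_divisors.mp hd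
  have hkd : k / d ≠ 0 := (Nat.div_ne_zero_iff_of_dvd hdk).mpr ⟨hk, ne_zero_of_dvd_ne_zero hk hdk⟩
  simp_rw [Int.natCast_dvd_natCast, mul_ite, mul_zero]
  rw [← sum_filter, sum_Icc_filter_dvd hkd, Nat.div_div_self hdk hk]
  simp_rw [mul_comm (f _)]

theorem weighted_average_ramanujan_sum_moebius_general (k r : ℕ) :
    (1 / (k : ℂ) ^ (r + 1)) * ∑ j ∈ Finset.Icc 1 k, (j : ℂ) ^ r * ramanujanSum k j =
      ∑ d ∈ k.divisors, ((moebius d : ℂ) / (d : ℂ) ^ (r + 1)) *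
        ∑ m ∈ Finset.Icc 1 d, (m : ℂ) ^ r := by
  rw [sum_Icc_mul_ramanujanSum, mul_sum]
  refine sum_congr rfl fun d hd => ?_
  obtain ⟨hdk, hk⟩ := Nat.mem_divisors.mp hd
  have hd0 : (d : ℂ) ≠ 0 := Nat.cast_ne_zero.mpr (ne_zero_of_dvd_ne_zero hk hdk)
  have hk_eq : (k : ℂ) = d * (k / d : ℕ) := by rw [← Nat.cast_mul, Nat.mul_div_cancel' hdk]
  simp_rw [Nat.cast_mul, mul_pow, ← mul_sum, hk_eq]
  field_simp
  ring

theorem weighted_average_ramanujan_sum_moebius (k r : ℕ) (hk : 0 < k) (hr : 0 < r) :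
    (1 / (k : ℂ) ^ (r + 1)) * ∑ j ∈ Finset.Icc 1 k, (j : ℂ) ^ r * ramanujanSum k j =
      ∑ d ∈ k.divisors, ((moebius d : ℂ) / (d : ℂ) ^ (r + 1)) *
        ∑ m ∈ Finset.Icc 1 d, (m : ℂ) ^ r :=
  weighted_average_ramanujan_sum_moebius_general k r
end

section
/- For every positive integer k, Σ_{j=1}^{k} σ(gcd(j,k)) · c_k(j) = k · φ(k), where σ(n) is the sum of divisors of n and φ is Euler's totient function. -/
open Finset ArithmeticFunction

/-! Since `σ(gcd(j, k)) = ∑_{d ∣ k, d ∣ j} d`, exchanging the sums writes the left side as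
`∑_{d ∣ k} ∑_{m ≤ k, (m, k) = 1} d · ∑_{j ≤ k, d ∣ j} w_m ^ j` with `w_m = ζ_k ^ m` a primitive
`k`-th root of unity. As `w_m ^ d` is a primitive `k/d`-th root of unity, the innermost sum
vanishes unless `d = k`, where it is `1`; so only `d = k` survives, once for each of the `φ(k)`
values of `m`. -/

namespace Nat

theorem card_filter_Icc_gcd_eq_one (k : ℕ) : #{m ∈ Icc 1 k | m.gcd k = 1} = φ k := by
  rw [← filter_coprime_Ico_eq_totient k 1, add_comm, ← Ico_add_one_right_eq_Icc]
  simp_rw [coprime_comm]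

theorem filter_dvd_divisors_eq_divisors_gcd {k : ℕ} (hk : k ≠ 0) (j : ℕ) :
    {d ∈ k.divisors | d ∣ j} = (j.gcd k).divisors := by
  ext d
  have := gcd_ne_zero_right (m := j) hk
  simp only [mem_filter, mem_divisors, dvd_gcd_iff]
  tauto

theorem sum_filter_Icc_dvd {M : Type*} [AddCommMonoid M] {d : ℕ} (hd : d ≠ 0) (n : ℕ)
    (f : ℕ → M) : ∑ j ∈ Icc 1 (d * n) with d ∣ j, f j = ∑ t ∈ Icc 1 n, f (d * t) := by
  have : {j ∈ Icc 1 (d * n) | d ∣ j} = (Icc 1 n).image (d * ·) := by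
    ext j
    simp only [mem_filter, mem_Icc, mem_image]
    constructor
    · rintro ⟨⟨hj1, hjn⟩, t, rfl⟩
      exact ⟨t, ⟨Nat.pos_of_mul_pos_left hj1,
        Nat.le_of_mul_le_mul_left hjn (pos_of_ne_zero hd)⟩, rfl⟩
    · rintro ⟨t, ⟨ht1, htn⟩, rfl⟩
      exact ⟨⟨Nat.mul_pos (pos_of_ne_zero hd) ht1, Nat.mul_le_mul_left d htn⟩, dvd_mul_right d t⟩
  rw [this, sum_image fun _ _ _ _ h => Nat.eq_of_mul_eq_mul_left (pos_of_ne_zero hd) h]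

end Nat

namespace IsPrimitiveRoot

variable {R : Type*} [CommRing R] [IsDomain R] {w : R} {k : ℕ}

theorem sum_Icc_pow_eq_zero (hw : IsPrimitiveRoot w k) (hk : 1 < k) :
    ∑ t ∈ Icc 1 k, w ^ t = 0 := by
  rw [← Ico_add_one_right_eq_Icc, sum_Ico_eq_sum_range, Nat.add_sub_cancel]
  simp_rw [pow_add, pow_one, ← mul_sum, hw.geom_sum_eq_zero hk, mul_zero]

theorem sum_filter_Icc_dvd_pow (hw : IsPrimitiveRoot w k) (hk : 0 < k) {d : ℕ} (hd : d ∣ k) :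
    ∑ j ∈ Icc 1 k with d ∣ j, w ^ j = if d = k then 1 else 0 := by
  obtain ⟨n, rfl⟩ := hd
  have hd : d ≠ 0 := left_ne_zero_of_mul hk.ne'
  rw [Nat.sum_filter_Icc_dvd hd]
  simp_rw [pow_mul]
  have hn : 1 ≤ n := Nat.pos_of_mul_pos_left hk
  obtain rfl | hn := hn.eq_or_lt
  · simp [(mul_one d ▸ hw).pow_eq_one]
  · rw [if_neg (by simpa [hd] using hn.ne'), (hw.pow hk rfl).sum_Icc_pow_eq_zero hn]

end IsPrimitiveRoot

theorem ramanujanSum_natCast_eq_sum_pow (k j : ℕ) :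
    ramanujanSum k j =
      ∑ m ∈ Icc 1 k with m.gcd k = 1, (Complex.exp (2 * Real.pi * Complex.I / k) ^ m) ^ j := by
  refine sum_congr rfl fun m _ => ?_
  rw [← Complex.exp_nat_mul, ← Complex.exp_nat_mul]
  push_cast
  ring_nf

theorem sigma_gcd_weighted_ramanujan_sum (k : ℕ) (hk : 0 < k) :
    ∑ j ∈ Finset.Icc 1 k, ((∑ d ∈ (Nat.gcd j k).divisors, d : ℕ) : ℂ) * ramanujanSum k j =
      (k : ℂ) * (Nat.totient k : ℂ) := by
  set ζ := Complex.exp (2 * Real.pi * Complex.I / k)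
  have hζ : IsPrimitiveRoot ζ k := Complex.isPrimitiveRoot_exp k hk.ne'
  calc _ = ∑ j ∈ Icc 1 k, ∑ d ∈ k.divisors with d ∣ j, ∑ m ∈ Icc 1 k with m.gcd k = 1,
          (d : ℂ) * (ζ ^ m) ^ j := by
        refine sum_congr rfl fun j _ => ?_
        rw [ramanujanSum_natCast_eq_sum_pow, Nat.filter_dvd_divisors_eq_divisors_gcd hk.ne',
          Nat.cast_sum, sum_mul]
        simp_rw [mul_sum]
        rfl
    _ = ∑ d ∈ k.divisors, ∑ m ∈ Icc 1 k with m.gcd k = 1,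
          (d : ℂ) * ∑ j ∈ Icc 1 k with d ∣ j, (ζ ^ m) ^ j := by
        rw [sum_comm' (t' := k.divisors) (s' := fun d => {j ∈ Icc 1 k | d ∣ j})
          (by simp only [mem_filter, Nat.mem_divisors, mem_Icc]; tauto)]
        simp_rw [mul_sum]
        exact sum_congr rfl fun d _ => sum_comm
    _ = ∑ d ∈ k.divisors, ∑ m ∈ Icc 1 k with m.gcd k = 1, if d = k then (k : ℂ) else 0 := by
        refine sum_congr rfl fun d hd => sum_congr rfl fun m hm => ?_
        rw [(hζ.pow_of_coprime m (mem_filter.mp hm).2).sum_filter_Icc_dvd_pow hk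
          (Nat.dvd_of_mem_divisors hd)]
        split_ifs with h <;> simp [h]
    _ = (k : ℂ) * (Nat.totient k : ℂ) := by
        rw [sum_comm, sum_const, Nat.card_filter_Icc_gcd_eq_one, sum_ite_eq',
          if_pos (Nat.mem_divisors_self k hk.ne'), nsmul_eq_mul, mul_comm]
end
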